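/- For every positive integer n, ∑_{k=1}^{n} cot²(kπ/(2n+1)) = n(2n−1)/3, where cot u = cos u / sin u. -/

import Mathlib

/-!
By de Moivre, `sin ((2n+1)x) = sin x ^ (2n+1) * Im ((cot x + i) ^ (2n+1))`, and this imaginary part
is `P (cot² x)` for the degree-`n` polynomial `P = ∑ᵢ (-1)^(n-i) C(2n+1, 2i) Xⁱ`. The `n` distinct
numbers `cot² (kπ/(2n+1))`, `1 ≤ k ≤ n`, are therefore all the roots of `P`, and Vieta's formula
gives their sum as `C(2n+1, 3) / (2n+1) = n(2n-1)/3`.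
-/

open Finset Polynomial Real
open Complex (I)

lemma Finset.sum_range_two_mul {M : Type*} [AddCommMonoid M] (f : ℕ → M) (n : ℕ) :
    ∑ k ∈ range (2 * n), f k = ∑ i ∈ range n, (f (2 * i) + f (2 * i + 1)) := by
  induction n with
  | zero => simp
  | succ n ih =>
    rw [show 2 * (n + 1) = 2 * n + 1 + 1 by ring, sum_range_succ, sum_range_succ, sum_range_succ,
      ih, add_assoc]

noncomputable def cotSqPoly (n : ℕ) : ℝ[X] :=
  ∑ i ∈ range (n + 1), C ((-1) ^ (n - i) * ((2 * n + 1).choose (2 * i) : ℝ)) * X ^ i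

lemma coeff_cotSqPoly (n i : ℕ) :
    (cotSqPoly n).coeff i =
      if i ≤ n then (-1) ^ (n - i) * ((2 * n + 1).choose (2 * i) : ℝ) else 0 := by
  simp only [cotSqPoly, finsetSum_coeff, coeff_C_mul_X_pow, sum_ite_eq, mem_range, Nat.lt_succ_iff]

lemma natDegree_cotSqPoly (n : ℕ) : (cotSqPoly n).natDegree = n := by
  refine natDegree_eq_of_le_of_coeff_ne_zero ?_ ?_
  · exact natDegree_le_iff_coeff_eq_zero.mpr fun i hi => by simp [coeff_cotSqPoly, not_le.mpr hi]
  · rw [coeff_cotSqPoly, if_pos le_rfl]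
    simp only [Nat.sub_self, pow_zero, one_mul, Nat.cast_ne_zero]
    exact (Nat.choose_pos (by omega)).ne'

lemma leadingCoeff_cotSqPoly (n : ℕ) : (cotSqPoly n).leadingCoeff = 2 * n + 1 := by
  rw [leadingCoeff, natDegree_cotSqPoly, coeff_cotSqPoly, if_pos le_rfl, Nat.sub_self, pow_zero,
    one_mul, Nat.choose_succ_self_right]
  push_cast; ring

lemma nextCoeff_cotSqPoly {n : ℕ} (hn : n ≠ 0) :
    (cotSqPoly n).nextCoeff = -(n * (2 * n - 1) * (2 * n + 1) / 3) := by
  obtain ⟨m, rfl⟩ := Nat.exists_eq_succ_of_ne_zero hn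
  rw [nextCoeff, natDegree_cotSqPoly, if_neg hn, coeff_cotSqPoly, if_pos (by omega),
    show m + 1 - (m + 1 - 1) = 1 by omega, show 2 * (m + 1 - 1) = 2 * m by omega,
    show 2 * (m + 1) + 1 = 2 * m + 1 + 1 + 1 by ring, Nat.cast_choose ℝ (by omega),
    show 2 * m + 1 + 1 + 1 - 2 * m = 3 by omega]
  simp only [Nat.factorial]
  push_cast
  field_simp
  ring

lemma Complex.I_pow_two_mul (j : ℕ) : I ^ (2 * j) = ((-1 : ℝ) ^ j : ℝ) := by
  rw [pow_mul, Complex.I_sq]; push_cast; rfl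

lemma im_ofReal_add_I_pow (n : ℕ) (t : ℝ) :
    ((t + I) ^ (2 * n + 1)).im = (cotSqPoly n).eval (t ^ 2) := by
  have hterm (k : ℕ) : ((t : ℂ) ^ k * I ^ (2 * n + 1 - k) * ((2 * n + 1).choose k : ℂ)).im =
      t ^ k * (2 * n + 1).choose k * (I ^ (2 * n + 1 - k)).im := by
    rw [mul_right_comm, ← Complex.ofReal_pow, ← Complex.ofReal_natCast, ← Complex.ofReal_mul,
      Complex.im_ofReal_mul]
  rw [add_pow, Complex.im_sum, show 2 * n + 1 + 1 = 2 * (n + 1) by ring,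
    sum_range_two_mul, cotSqPoly, eval_finsetSum]
  refine sum_congr rfl fun i hi => ?_
  have hin : i ≤ n := Nat.lt_succ_iff.mp (mem_range.mp hi)
  rw [hterm, hterm, show 2 * n + 1 - 2 * i = 2 * (n - i) + 1 by omega,
    show 2 * n + 1 - (2 * i + 1) = 2 * (n - i) by omega, pow_succ, Complex.I_pow_two_mul,
    Complex.im_ofReal_mul, Complex.ofReal_im, Complex.I_im, eval_C_mul, eval_pow, eval_X]
  ring

lemma sin_two_mul_add_one_mul (n : ℕ) {x : ℝ} (hx : sin x ≠ 0) :
    sin ((2 * n + 1) * x) = sin x ^ (2 * n + 1) * (cotSqPoly n).eval ((cos x / sin x) ^ 2) := by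
  have hfactor : (cos x : ℂ) + sin x * I = sin x * ((cos x / sin x : ℝ) + I) := by
    rw [Complex.ofReal_div, mul_add, mul_div_cancel₀ _ (Complex.ofReal_ne_zero.mpr hx)]
  have hmoivre := Complex.cos_add_sin_mul_I_pow (2 * n + 1) x
  rw [← Complex.ofReal_cos, ← Complex.ofReal_sin, hfactor, mul_pow, ← Complex.ofReal_pow,
    show ((2 * n + 1 : ℕ) : ℂ) * x = ((2 * n + 1) * x : ℝ) by push_cast; ring,
    ← Complex.ofReal_cos, ← Complex.ofReal_sin] at hmoivre
  have him := congrArg Complex.im hmoivre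
  simp only [Complex.im_ofReal_mul, im_ofReal_add_I_pow, Complex.add_im, Complex.ofReal_im,
    Complex.I_im, mul_one, zero_add] at him
  exact him.symm

lemma injOn_cos_div_sin_sq : Set.InjOn (fun x => (cos x / sin x) ^ 2) (Set.Ioo 0 (π / 2)) := by
  intro x hx y hy hxy
  have hcot {z : ℝ} (hz : z ∈ Set.Ioo 0 (π / 2)) : cos z / sin z = (tan z)⁻¹ := by
    rw [tan_eq_sin_div_cos, inv_div]
  have htan_pos {z : ℝ} (hz : z ∈ Set.Ioo 0 (π / 2)) : 0 < tan z :=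
    tan_pos_of_pos_of_lt_pi_div_two hz.1 hz.2
  have hmem {z : ℝ} (hz : z ∈ Set.Ioo 0 (π / 2)) : z ∈ Set.Ioo (-(π / 2)) (π / 2) :=
    ⟨by linarith [hz.1, pi_pos], hz.2⟩
  simp only [hcot hx, hcot hy] at hxy
  rw [pow_left_inj₀ (inv_pos.mpr (htan_pos hx)).le (inv_pos.mpr (htan_pos hy)).le two_ne_zero,
    inv_inj] at hxy
  exact injOn_tan (hmem hx) (hmem hy) hxy

lemma isRoot_cotSqPoly {n : ℕ} {x : ℝ} (hx : sin x ≠ 0) (hroot : sin ((2 * n + 1) * x) = 0) :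
    (cotSqPoly n).IsRoot ((cos x / sin x) ^ 2) := by
  rw [sin_two_mul_add_one_mul n hx] at hroot
  exact (mul_eq_zero.mp hroot).resolve_left (pow_ne_zero _ hx)

lemma Polynomial.nextCoeff_eq_neg_leadingCoeff_mul_sum {R ι : Type*} [CommRing R] [IsDomain R]
    {p : R[X]} {s : Finset ι} {f : ι → R} (hp : p ≠ 0) (hinj : Set.InjOn f s)
    (hroot : ∀ i ∈ s, p.IsRoot (f i)) (hcard : p.natDegree = #s) :
    p.nextCoeff = -p.leadingCoeff * ∑ i ∈ s, f i := by
  classical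
  have hcard_image : #(s.image f) = p.natDegree := by rw [card_image_of_injOn hinj, hcard]
  have hroots : p.roots = (s.image f).val :=
    roots_eq_of_natDegree_le_card_of_ne_zero (by simpa using hroot) hcard_image.ge hp
  have hsplits : p.Splits := by rwa [splits_iff_card_roots, hroots, card_val]
  rw [hsplits.nextCoeff_eq_neg_sum_roots_mul_leadingCoeff, hroots, sum_val, sum_image hinj]
  rfl

lemma mul_pi_div_two_mul_add_one_mem_Ioo {n k : ℕ} (hk : k ∈ Icc 1 n) :
    k * π / (2 * n + 1) ∈ Set.Ioo 0 (π / 2) := by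
  obtain ⟨hk1, hkn⟩ := mem_Icc.mp hk
  have hkn' : (k : ℝ) ≤ n := by exact_mod_cast hkn
  refine ⟨by positivity, ?_⟩
  rw [div_lt_div_iff₀ (by positivity) two_pos]
  nlinarith [pi_pos]

/-- For every positive integer `n`,
`∑_{k=1}^n cot²(kπ/(2n+1)) = n(2n-1)/3`, where `cot u = cos u / sin u`. -/
theorem sum_cot_sq (n : ℕ) (hn : 0 < n) :
    ∑ k ∈ Finset.Icc 1 n,
        (Real.cos ((k : ℝ) * Real.pi / (2 * (n : ℝ) + 1)) /
          Real.sin ((k : ℝ) * Real.pi / (2 * (n : ℝ) + 1))) ^ 2 =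
      (n : ℝ) * (2 * (n : ℝ) - 1) / 3 := by
  set x : ℕ → ℝ := fun k => k * π / (2 * n + 1)
  have hden : (2 * n + 1 : ℝ) ≠ 0 := by positivity
  have hinj : Set.InjOn (fun k => (cos (x k) / sin (x k)) ^ 2) (Icc 1 n) := by
    refine injOn_cos_div_sin_sq.comp (fun k _ l _ hkl => ?_)
      fun k hk => mul_pi_div_two_mul_add_one_mem_Ioo hk
    simpa [x, hden, pi_ne_zero] using hkl
  have hroot (k : ℕ) (hk : k ∈ Icc 1 n) : (cotSqPoly n).IsRoot ((cos (x k) / sin (x k)) ^ 2) := by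
    obtain ⟨hpos, hlt⟩ := mul_pi_div_two_mul_add_one_mem_Ioo hk
    refine isRoot_cotSqPoly (sin_pos_of_pos_of_lt_pi hpos (by linarith)).ne' ?_
    rw [show (2 * n + 1) * x k = k * π by simp only [x]; field_simp]
    exact sin_nat_mul_pi k
  have hvieta := nextCoeff_eq_neg_leadingCoeff_mul_sum
    (leadingCoeff_ne_zero.mp (by rw [leadingCoeff_cotSqPoly]; exact hden)) hinj hroot
    (by rw [natDegree_cotSqPoly, Nat.card_Icc, Nat.add_sub_cancel])
  rw [nextCoeff_cotSqPoly hn.ne', leadingCoeff_cotSqPoly] at hvieta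
  refine mul_left_cancel₀ hden ?_
  linear_combination hvieta
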